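/- arXiv:1104.2401 — 3 statements merged into one kernel-verified Lean document; each statement's English description precedes it below -/
import Mathlib

section
/- Let $e_1, e_2, e_3$ be real numbers with $e_3 < e_2 < e_1$ and $e_1+e_2+e_3=0$, and let $g_2 = -4(e_1e_2+e_2e_3+e_3e_1)$, $g_3 = 4e_1e_2e_3$. Then for every real $c_0$, $e_2^2(g_2 - 12c_0^2) + e_2(6g_3 + 4g_2c_0) + (g_2^2/4 + g_2c_0^2 + 6g_3c_0) > 0$. -/
theorem stmt2 (e1 e2 e3 g2 g3 : ℝ) (h32 : e3 < e2) (h21 : e2 < e1)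
    (hsum : e1 + e2 + e3 = 0)
    (hg2 : g2 = -4 * (e1 * e2 + e2 * e3 + e3 * e1))
    (hg3 : g3 = 4 * e1 * e2 * e3) :
    ∀ c0 : ℝ,
      e2 ^ 2 * (g2 - 12 * c0 ^ 2) + e2 * (6 * g3 + 4 * g2 * c0) +
        (g2 ^ 2 / 4 + g2 * c0 ^ 2 + 6 * g3 * c0) > 0 := by
  intro c0
  have he1 : e1 = -e2 - e3 := by linarith
  subst he1 hg2 hg3
  set E := e2 ^ 2 * (-4 * ((-e2 - e3) * e2 + e2 * e3 + e3 * (-e2 - e3)) - 12 * c0 ^ 2) +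
      e2 * (6 * (4 * (-e2 - e3) * e2 * e3) + 4 * (-4 * ((-e2 - e3) * e2 + e2 * e3 + e3 * (-e2 - e3))) * c0) +
      ((-4 * ((-e2 - e3) * e2 + e2 * e3 + e3 * (-e2 - e3))) ^ 2 / 4 +
        (-4 * ((-e2 - e3) * e2 + e2 * e3 + e3 * (-e2 - e3))) * c0 ^ 2 +
        6 * (4 * (-e2 - e3) * e2 * e3) * c0) with hE
  have hd1 : (0:ℝ) < e2 - e3 := by linarith
  have hd2 : (0:ℝ) < (-e2 - e3) - e2 := by linarith
  have hA : (0:ℝ) < 4 * (e2 - e3) * ((-e2 - e3) - e2) := by positivity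
  have key : 4 * (4 * (e2 - e3) * ((-e2 - e3) - e2)) * E =
      (2 * (4 * (e2 - e3) * ((-e2 - e3) - e2)) * c0 +
        (-8 * e2 * ((-e2 - e3) - e2) * (e2 - e3))) ^ 2 +
      64 * (e2 - e3) ^ 3 * ((-e2 - e3) - e2) ^ 3 := by
    rw [hE]; ring
  have hcube : (0:ℝ) < 64 * (e2 - e3) ^ 3 * ((-e2 - e3) - e2) ^ 3 := by positivity
  nlinarith [sq_nonneg (2 * (4 * (e2 - e3) * ((-e2 - e3) - e2)) * c0 +
      (-8 * e2 * ((-e2 - e3) - e2) * (e2 - e3))), mul_pos hA hcube]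
end

section
/- For $0 < q < 1$, the Jacobi theta null values satisfy $\theta_3(0|\tau)\,\theta_4(0|\tau) = \theta_4(0|2\tau)^2$, i.e., with $q = e^{\pi i \tau}$, $\Big(1+2\sum_{n\ge1} q^{n^2}\Big)\Big(1+2\sum_{n\ge1}(-1)^n q^{n^2}\Big) = \Big(1+2\sum_{n\ge1}(-1)^n q^{2n^2}\Big)^2$. -/
/-!
Symmetrising θ₃(q) θ₄(q) = ∑_{m,n ∈ ℤ} (-1)^n q^{m² + n²} in (m, n) gives
2 θ₃(q) θ₄(q) = ∑ ((-1)^m + (-1)^n) q^{m² + n²}. The terms with m + n odd vanish, and the pairs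
with m + n even are exactly (a + b, a - b) for (a, b) ∈ ℤ², at which the summand is
2 · (-1)^a q^{2a²} · (-1)^b q^{2b²}; summing over (a, b) gives 2 θ₄(q²)².
-/

namespace JacobiTheta

variable {𝕜 : Type*} [RCLike 𝕜]

noncomputable def theta3 (q : 𝕜) : 𝕜 := ∑' n : ℤ, q ^ (n ^ 2)

noncomputable def theta4 (q : 𝕜) : 𝕜 := ∑' n : ℤ, (-1) ^ n * q ^ (n ^ 2)

lemma summable_norm_zpow_sq {K : Type*} [NormedDivisionRing K] {q : K} (hq : ‖q‖ < 1) :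
    Summable fun n : ℤ ↦ ‖q ^ (n ^ 2)‖ := by
  have hnat : Summable fun n : ℕ ↦ ‖q‖ ^ (n ^ 2) :=
    (summable_geometric_of_lt_one (norm_nonneg q) hq).of_nonneg_of_le (fun _ ↦ by positivity)
      fun n ↦ pow_le_pow_of_le_one (norm_nonneg q) hq.le (Nat.le_self_pow two_ne_zero n)
  apply Summable.of_nat_of_neg <;> simpa [norm_zpow, ← zpow_natCast] using hnat

lemma norm_neg_one_zpow_mul {K : Type*} [NormedDivisionRing K] (n : ℤ) (x : K) :
    ‖(-1) ^ n * x‖ = ‖x‖ := by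
  rw [norm_mul, norm_zpow, norm_neg, norm_one, one_zpow, one_mul]

lemma summable_norm_theta4_term {K : Type*} [NormedDivisionRing K] {q : K} (hq : ‖q‖ < 1) :
    Summable fun n : ℤ ↦ ‖(-1) ^ n * q ^ (n ^ 2)‖ := by
  simpa only [norm_neg_one_zpow_mul] using summable_norm_zpow_sq hq

lemma neg_one_zpow_add_neg_one_zpow_of_not_even {R : Type*} [DivisionRing R] {m n : ℤ}
    (h : ¬Even (m + n)) : (-1 : R) ^ m + (-1) ^ n = 0 := by
  rcases Int.even_or_odd m with hm | hm <;> rcases Int.even_or_odd n with hn | hn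
  · exact absurd (hm.add hn) h
  · rw [hm.neg_one_zpow, hn.neg_one_zpow, add_neg_cancel]
  · rw [hm.neg_one_zpow, hn.neg_one_zpow, neg_add_cancel]
  · exact absurd (hm.add_odd hn) h

lemma neg_one_zpow_sub_eq_add {R : Type*} [DivisionRing R] (a b : ℤ) :
    (-1 : R) ^ (a - b) = (-1) ^ (a + b) := by
  rw [show a + b = a - b + 2 * b by ring, zpow_add₀ (neg_ne_zero.mpr one_ne_zero),
    (even_two_mul b).neg_one_zpow, mul_one]

lemma zpow_add_sq_mul_zpow_sub_sq {K : Type*} [DivisionRing K] {q : K} (hq : q ≠ 0) (a b : ℤ) :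
    q ^ ((a + b) ^ 2) * q ^ ((a - b) ^ 2) = (q ^ 2) ^ (a ^ 2) * (q ^ 2) ^ (b ^ 2) := by
  rw [← zpow_add₀ hq, ← zpow_natCast, ← zpow_mul, ← zpow_mul, ← zpow_add₀ hq]
  congr 1
  push_cast
  ring

lemma tsum_eq_tsum_comp_add_sub {α : Type*} [AddCommMonoid α] [TopologicalSpace α]
    {h : ℤ × ℤ → α}
    (hodd : ∀ m n, ¬Even (m + n) → h (m, n) = 0) :
    ∑' p, h p = ∑' p : ℤ × ℤ, h (p.1 + p.2, p.1 - p.2) := by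
  refine (Function.Injective.tsum_eq (g := fun p : ℤ × ℤ ↦ (p.1 + p.2, p.1 - p.2)) ?_ ?_).symm
  · rintro ⟨a, b⟩ ⟨c, d⟩ h
    simp only [Prod.mk.injEq] at h ⊢
    omega
  · rintro ⟨m, n⟩ hmn
    by_contra hrange
    refine hmn (hodd m n fun ⟨k, hk⟩ ↦ hrange ⟨(k, m - k), ?_⟩)
    simp only [Prod.mk.injEq]
    omega

lemma two_mul_theta3_mul_theta4 {q : 𝕜} (hq : ‖q‖ < 1) :
    2 * (theta3 q * theta4 q) =
      ∑' p : ℤ × ℤ, ((-1) ^ p.1 + (-1) ^ p.2) * (q ^ (p.1 ^ 2) * q ^ (p.2 ^ 2)) := by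
  set f : ℤ × ℤ → 𝕜 := fun p ↦ q ^ (p.1 ^ 2) * ((-1) ^ p.2 * q ^ (p.2 ^ 2)) with hf
  have hprod : theta3 q * theta4 q = ∑' p, f p :=
    tsum_mul_tsum_of_summable_norm (f := fun n : ℤ ↦ q ^ (n ^ 2))
      (g := fun n : ℤ ↦ (-1) ^ n * q ^ (n ^ 2)) (summable_norm_zpow_sq hq)
      (summable_norm_theta4_term hq)
  have hsum : Summable f :=
    summable_mul_of_summable_norm (f := fun n : ℤ ↦ q ^ (n ^ 2))
      (g := fun n : ℤ ↦ (-1) ^ n * q ^ (n ^ 2)) (summable_norm_zpow_sq hq)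
      (summable_norm_theta4_term hq)
  have hswap : ∑' p : ℤ × ℤ, f p.swap = ∑' p, f p := (Equiv.prodComm ℤ ℤ).tsum_eq f
  rw [hprod, two_mul]
  have hsum_swap : Summable fun p : ℤ × ℤ ↦ f p.swap := hsum.comp_injective Prod.swap_injective
  nth_rw 1 [← hswap]
  rw [← hsum_swap.tsum_add hsum]
  congr 1 with ⟨m, n⟩
  simp only [hf, Prod.fst_swap, Prod.snd_swap]
  ring

theorem theta3_mul_theta4 {q : 𝕜} (hq0 : q ≠ 0) (hq : ‖q‖ < 1) :
    theta3 q * theta4 q = theta4 (q ^ 2) ^ 2 := by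
  have hq2 : ‖q ^ 2‖ < 1 := by rw [norm_pow]; exact pow_lt_one₀ (norm_nonneg q) hq two_ne_zero
  have hterm (a b : ℤ) :
      ((-1) ^ (a + b) + (-1) ^ (a - b)) * (q ^ ((a + b) ^ 2) * q ^ ((a - b) ^ 2)) =
        2 * ((-1) ^ a * (q ^ 2) ^ (a ^ 2) * ((-1) ^ b * (q ^ 2) ^ (b ^ 2))) := by
    rw [neg_one_zpow_sub_eq_add, zpow_add_sq_mul_zpow_sub_sq hq0,
      zpow_add₀ (neg_ne_zero.mpr one_ne_zero)]
    ring
  have hsquare : theta4 (q ^ 2) ^ 2 =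
      ∑' p : ℤ × ℤ, (-1) ^ p.1 * (q ^ 2) ^ (p.1 ^ 2) * ((-1) ^ p.2 * (q ^ 2) ^ (p.2 ^ 2)) :=
    (sq _).trans (tsum_mul_tsum_of_summable_norm (f := fun n : ℤ ↦ (-1) ^ n * (q ^ 2) ^ (n ^ 2))
      (g := fun n : ℤ ↦ (-1) ^ n * (q ^ 2) ^ (n ^ 2)) (summable_norm_theta4_term hq2)
      (summable_norm_theta4_term hq2))
  apply mul_left_cancel₀ (two_ne_zero (α := 𝕜))
  rw [two_mul_theta3_mul_theta4 hq, tsum_eq_tsum_comp_add_sub fun m n h ↦ by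
    rw [neg_one_zpow_add_neg_one_zpow_of_not_even h, zero_mul]]
  simp only [hterm, tsum_mul_left, hsquare]

lemma tsum_int_eq_zero_add_two_mul_tsum_succ {R : Type*} [NormedRing R] [CompleteSpace R]
    {f : ℤ → R} (hf : f.Even) (hs : Summable f) :
    ∑' n, f n = f 0 + 2 * ∑' n : ℕ, f (n + 1) := by
  rw [tsum_int_eq_zero_add_two_mul_tsum_pnat hf hs, tsum_pnat_eq_tsum_succ (f := fun n : ℕ ↦ f n),
    nsmul_eq_mul]
  push_cast
  rfl

lemma theta3_eq {q : 𝕜} (hq : ‖q‖ < 1) :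
    theta3 q = 1 + 2 * ∑' n : ℕ, q ^ ((n + 1) ^ 2) := by
  rw [theta3, tsum_int_eq_zero_add_two_mul_tsum_succ (fun n ↦ by rw [even_two.neg_pow])
    (summable_norm_zpow_sq hq).of_norm]
  norm_cast
  simp

lemma theta4_eq {q : 𝕜} (hq : ‖q‖ < 1) :
    theta4 q = 1 + 2 * ∑' n : ℕ, (-1) ^ (n + 1) * q ^ ((n + 1) ^ 2) := by
  rw [theta4, tsum_int_eq_zero_add_two_mul_tsum_succ (fun n ↦ by
      rw [even_two.neg_pow, zpow_neg, ← inv_zpow, inv_neg, inv_one])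
    (summable_norm_theta4_term hq).of_norm]
  norm_cast
  simp

end JacobiTheta

theorem stmt8 (q : ℝ) (hq0 : 0 < q) (hq1 : q < 1) :
    (1 + 2 * ∑' n : ℕ, q ^ ((n + 1) ^ 2)) *
        (1 + 2 * ∑' n : ℕ, (-1 : ℝ) ^ (n + 1) * q ^ ((n + 1) ^ 2)) =
      (1 + 2 * ∑' n : ℕ, (-1 : ℝ) ^ (n + 1) * (q ^ 2) ^ ((n + 1) ^ 2)) ^ 2 := by
  have hq : ‖q‖ < 1 := by rwa [Real.norm_of_nonneg hq0.le]
  have hq2 : ‖q ^ 2‖ < 1 := by rw [norm_pow]; exact pow_lt_one₀ (norm_nonneg q) hq two_ne_zero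
  rw [← JacobiTheta.theta3_eq hq, ← JacobiTheta.theta4_eq hq, ← JacobiTheta.theta4_eq hq2]
  exact JacobiTheta.theta3_mul_theta4 hq0.ne' hq
end

section
/- Let $0<q<1$ and define $e_1 - c_0 = \pi^2 + 8\pi^2\sum_{n\ge1} q^{2n}/(1+q^{2n})^2$ and $\pi^2\theta_3^2\theta_4^2 = \pi^2 + 8\pi^2\sum_{n\ge1}(-1)^n q^{2n}/(1+q^{2n})^2$. Suppose further $e_3 < c_0 < e_2 < e_1$, $e_1+e_2+e_3=0$, $(e_1-e_3)^{1/2} = \pi\theta_3^2$, $(e_1-e_2)^{1/2} = \pi\theta_4^2$, $g_2 = -4(e_1e_2+e_2e_3+e_3e_1)$, $g_3 = 4e_1e_2e_3$. Then $e_1^2(g_2-12c_0^2)+e_1(6g_3+4g_2c_0)+(g_2^2/4+g_2c_0^2+6g_3c_0) < 0$. -/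
theorem stmt11 (q e1 e2 e3 c0 g2 g3 θ3 θ4 : ℝ) (hq0 : 0 < q) (hq1 : q < 1)
    (h3c : e3 < c0) (hc2 : c0 < e2) (h21 : e2 < e1)
    (hsum : e1 + e2 + e3 = 0)
    (hθ3 : Real.sqrt (e1 - e3) = Real.pi * θ3 ^ 2)
    (hθ4 : Real.sqrt (e1 - e2) = Real.pi * θ4 ^ 2)
    (hg2 : g2 = -4 * (e1 * e2 + e2 * e3 + e3 * e1))
    (hg3 : g3 = 4 * e1 * e2 * e3)
    (he1c0 : e1 - c0 = Real.pi ^ 2 + 8 * Real.pi ^ 2 *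
        ∑' n : ℕ, q ^ (2 * (n + 1)) / (1 + q ^ (2 * (n + 1))) ^ 2)
    (hθ34 : Real.pi ^ 2 * θ3 ^ 2 * θ4 ^ 2 = Real.pi ^ 2 + 8 * Real.pi ^ 2 *
        ∑' n : ℕ, (-1 : ℝ) ^ (n + 1) * q ^ (2 * (n + 1)) / (1 + q ^ (2 * (n + 1))) ^ 2) :
    e1 ^ 2 * (g2 - 12 * c0 ^ 2) + e1 * (6 * g3 + 4 * g2 * c0) +
      (g2 ^ 2 / 4 + g2 * c0 ^ 2 + 6 * g3 * c0) < 0 := by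
  set f : ℕ → ℝ := fun n => q ^ (2 * (n + 1)) / (1 + q ^ (2 * (n + 1))) ^ 2 with hf
  set g : ℕ → ℝ := fun n => (-1 : ℝ) ^ (n + 1) * q ^ (2 * (n + 1)) / (1 + q ^ (2 * (n + 1))) ^ 2 with hg
  have hfpos : ∀ n, 0 < f n := by
    intro n
    have h1 : 0 < q ^ (2 * (n + 1)) := pow_pos hq0 _
    have h2 : 0 < (1 + q ^ (2 * (n + 1))) ^ 2 := by positivity
    exact div_pos h1 h2
  have hfle : ∀ n, f n ≤ (q ^ 2) ^ (n + 1) := by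
    intro n
    have h1 : 0 < q ^ (2 * (n + 1)) := pow_pos hq0 _
    have h2 : (1 : ℝ) ≤ (1 + q ^ (2 * (n + 1))) ^ 2 := by nlinarith
    calc f n ≤ q ^ (2 * (n + 1)) / 1 := by
          apply div_le_div_of_nonneg_left h1.le one_pos h2
      _ = (q ^ 2) ^ (n + 1) := by rw [div_one, ← pow_mul]
  have hsumgeo : Summable (fun n : ℕ => (q ^ 2) ^ (n + 1)) := by
    have : Summable (fun n : ℕ => (q ^ 2) ^ n) :=
      summable_geometric_of_lt_one (by positivity) (by nlinarith)
    exact (summable_nat_add_iff 1).mpr this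
  have hfsum : Summable f :=
    Summable.of_nonneg_of_le (fun n => (hfpos n).le) hfle hsumgeo
  have hgabs : ∀ n, |g n| = f n := by
    intro n
    simp only [hg, hf, abs_div, abs_mul, abs_pow, abs_neg, abs_one, one_pow, one_mul]
    rw [abs_of_pos hq0, abs_of_pos (show (0:ℝ) < 1 + q ^ (2 * (n + 1)) by positivity)]
  have hgsum : Summable g := by
    apply Summable.of_abs
    simpa only [funext hgabs] using hfsum
  have hgle : ∀ n, g n ≤ f n := by
    intro n
    have := hgabs n
    have := abs_nonneg (g n)
    nlinarith [le_abs_self (g n)]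
  have hglt : g 0 < f 0 := by
    simp only [hg, hf]
    have h1 : 0 < q ^ (2 * (0 + 1)) := pow_pos hq0 _
    have h2 : 0 < (1 + q ^ (2 * (0 + 1))) ^ 2 := by positivity
    rw [pow_one, neg_one_mul]
    rw [div_lt_div_iff₀ h2 h2]
    nlinarith
  have htsum : (∑' n, g n) < ∑' n, f n := Summable.tsum_lt_tsum hgle hglt hgsum hfsum
  have hπ : (0 : ℝ) < Real.pi := Real.pi_pos
  have hkey : Real.pi ^ 2 * θ3 ^ 2 * θ4 ^ 2 < e1 - c0 := by
    rw [he1c0, hθ34]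
    have : 8 * Real.pi ^ 2 * (∑' n, g n) < 8 * Real.pi ^ 2 * ∑' n, f n := by
      apply mul_lt_mul_of_pos_left htsum; positivity
    linarith
  -- sqrt identities
  have h13 : (0 : ℝ) ≤ e1 - e3 := by linarith
  have h12 : (0 : ℝ) ≤ e1 - e2 := by linarith
  have hprod : Real.sqrt (e1 - e3) * Real.sqrt (e1 - e2) = Real.pi ^ 2 * θ3 ^ 2 * θ4 ^ 2 := by
    rw [hθ3, hθ4]; ring
  have hnn : (0 : ℝ) ≤ Real.pi ^ 2 * θ3 ^ 2 * θ4 ^ 2 := by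
    rw [← hprod]; positivity
  have hsq : (Real.sqrt (e1 - e3) * Real.sqrt (e1 - e2)) ^ 2 = (e1 - e3) * (e1 - e2) := by
    rw [mul_pow, Real.sq_sqrt h13, Real.sq_sqrt h12]
  have hK : (e1 - e3) * (e1 - e2) < (e1 - c0) ^ 2 := by
    have h1 : Real.pi ^ 2 * θ3 ^ 2 * θ4 ^ 2 < e1 - c0 := hkey
    nlinarith [hsq, hprod, hnn]
  subst hg2 hg3
  have he3 : e3 = -e1 - e2 := by linarith
  subst he3
  nlinarith [mul_pos (show (0:ℝ) < e1 - e2 by linarith) (show (0:ℝ) < e1 - (-e1 - e2) by linarith), hK, sq_nonneg (e1 - c0)]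
end
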